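/- Let A be an abelian length category with Gabriel-Roiter measure μ. If X, Y are indecomposable with μ(X) < μ(Y), then there exist indecomposable subobjects Y' ⊂ Y'' ⊆ Y such that Y' is a Gabriel-Roiter predecessor of Y'', μ(Y') ≤ μ(X) < μ(Y''), and ℓ(Y') ≤ ℓ(X). -/

import Mathlib

/-!
Among the indecomposable subobjects `t ⊆ Y` with `μ(X) < μ(t)` (`Y` is one of them) pick a
minimal one, `T`; subobject lattices of objects of finite length are Artinian. Every proper
indecomposable subobject of `T` then has measure `≤ μ(X)`. `T` has a proper indecomposable
subobject: a simple one, unless `T` is simple, but then `μ(T) = {1} ≤ μ(X)`. One of maximal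
measure, `Y'`, is a Gabriel-Roiter predecessor of `T`, and `μ(T) = μ(Y') ∪ {ℓ(T)}`. Finally
`ℓ(Y') ≤ ℓ(X)`: otherwise all of `μ(X)` lies below `ℓ(T)`, so `μ(X) < μ(Y') ∪ {ℓ(T)}` already
gives `μ(X) ≤ μ(Y')`; hence `μ(X) = μ(Y')` contains `ℓ(Y')`, whereas every element of `μ(X)` is
at most `ℓ(X)`.
-/

open CategoryTheory CategoryTheory.Limits

/-- The lexicographic order on finite subsets of ℕ:
`X ≤ Y` iff `min (Y \ X) ≤ min (X \ Y)`, with `min ∅ = ⊤`. -/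
def lexLE (X Y : Finset ℕ) : Prop :=
  (Y \ X).min ≤ (X \ Y).min

/-- Strict lexicographic order. -/
def lexLT (X Y : Finset ℕ) : Prop :=
  lexLE X Y ∧ ¬ lexLE Y X

variable {C : Type*} [Category C] [Abelian C]

/-- `n` is the composition length of the object `X`: there is a maximal
strictly increasing chain of subobjects of `X` from `⊥` to `⊤` with `n`
steps, and every strictly increasing chain of subobjects has at most
`n` steps. -/
def ObjLength (X : C) (n : ℕ) : Prop :=
  (∃ f : Fin (n + 1) → Subobject X, StrictMono f ∧ f 0 = ⊥ ∧ f (Fin.last n) = ⊤) ∧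
  ∀ (m : ℕ) (f : Fin (m + 1) → Subobject X), StrictMono f → m ≤ n

/-- `A` is the set of lengths of a finite chain of indecomposable subobjects
of `X` ending in `X` itself. -/
def IsGRChainVal (len : C → ℕ) (X : C) (A : Finset ℕ) : Prop :=
  ∃ s : Finset (Subobject X),
    IsChain (· ≤ ·) (s : Set (Subobject X)) ∧
    (⊤ : Subobject X) ∈ s ∧
    (∀ t ∈ s, Indecomposable ((t : Subobject X) : C)) ∧
    s.image (fun t : Subobject X => len ((t : Subobject X) : C)) = A

/-- `mu` is the Gabriel-Roiter measure associated to the length function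
`len`: for each indecomposable `X`, `mu X` is the lexicographic maximum of
the sets of lengths along chains of indecomposable subobjects of `X`. -/
def IsGRMeasure (len : C → ℕ) (mu : C → Finset ℕ) : Prop :=
  ∀ X : C, Indecomposable X →
    IsGRChainVal len X (mu X) ∧
    ∀ A : Finset ℕ, IsGRChainVal len X A → lexLE A (mu X)

/-- `X` is a Gabriel-Roiter predecessor of `Y`: both are indecomposable,
`X` is a proper subobject of `Y`, and `mu X` attains the maximum of the
Gabriel-Roiter measures of the proper indecomposable subobjects of `Y`. -/
def IsGRPred (mu : C → Finset ℕ) (X Y : C) : Prop :=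
  Indecomposable X ∧ Indecomposable Y ∧
  (∃ f : X ⟶ Y, Mono f ∧ ¬ IsIso f) ∧
  ∀ t : Subobject Y, t ≠ ⊤ → Indecomposable ((t : Subobject Y) : C) →
    lexLE (mu ((t : Subobject Y) : C)) (mu X)

section LexOrder

open Finset Colex

theorem lexLE_iff_forall_exists {A B : Finset ℕ} :
    lexLE A B ↔ ∀ a ∈ A, a ∉ B → ∃ b ∈ B, b ∉ A ∧ b ≤ a := by
  rw [lexLE, Finset.le_min_iff]
  simp only [mem_sdiff, and_imp]
  refine forall₂_congr fun a _ => imp_congr_right fun _ => ?_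
  rw [min_eq_inf_withTop, Finset.inf_le_iff (WithTop.coe_lt_top a)]
  simp [and_assoc]

-- `lexLE` is the colexicographic order for the reversed order on `ℕ`, hence a linear order.
def lexKey (A : Finset ℕ) : Colex (Finset ℕᵒᵈ) :=
  toColex (A.map OrderDual.toDual.toEmbedding)

theorem lexLE_iff_lexKey_le {A B : Finset ℕ} : lexLE A B ↔ lexKey A ≤ lexKey B := by
  rw [lexLE_iff_forall_exists, lexKey, lexKey, toColex_le_toColex]
  simp [OrderDual.forall, OrderDual.exists]

theorem lexKey_injective : Function.Injective lexKey :=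
  fun _ _ h => map_injective _ (toColex_inj.mp h)

theorem lexLE_trans {A B D : Finset ℕ} (h₁ : lexLE A B) (h₂ : lexLE B D) : lexLE A D :=
  lexLE_iff_lexKey_le.mpr ((lexLE_iff_lexKey_le.mp h₁).trans (lexLE_iff_lexKey_le.mp h₂))

theorem lexLE_antisymm {A B : Finset ℕ} (h₁ : lexLE A B) (h₂ : lexLE B A) : A = B :=
  lexKey_injective ((lexLE_iff_lexKey_le.mp h₁).antisymm (lexLE_iff_lexKey_le.mp h₂))

theorem lexLT_iff_not_lexLE {A B : Finset ℕ} : lexLT A B ↔ ¬ lexLE B A := by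
  simp only [lexLT, lexLE_iff_lexKey_le, not_le]
  exact and_iff_right_of_imp le_of_lt

theorem lexLE_of_subset {A B : Finset ℕ} (h : A ⊆ B) : lexLE A B :=
  lexLE_iff_forall_exists.mpr fun _ ha haB => absurd (h ha) haB

theorem lexLE_insert_insert {A B : Finset ℕ} {l : ℕ} (h : lexLE A B) (hA : l ∉ A) (hB : l ∉ B) :
    lexLE (insert l A) (insert l B) := by
  rwa [lexLE, insert_sdiff_insert, insert_sdiff_insert, sdiff_insert_of_notMem hB,
    sdiff_insert_of_notMem hA]

theorem lexLE_of_lexLE_insert {A B : Finset ℕ} {l : ℕ} (hA : ∀ a ∈ A, a < l)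
    (h : lexLE A (insert l B)) : lexLE A B := by
  rw [lexLE_iff_forall_exists] at h ⊢
  intro a ha haB
  obtain ⟨b, hb, hbA, hba⟩ := h a ha (by simpa [(hA a ha).ne] using haB)
  refine ⟨b, (mem_insert.mp hb).resolve_left ?_, hbA, hba⟩
  exact (hba.trans_lt (hA a ha)).ne

theorem mem_of_lexLE_of_forall_le {A B : Finset ℕ} {a : ℕ} (h : lexLE A B) (ha : a ∈ A)
    (hB : ∀ b ∈ B, a ≤ b) : a ∈ B := by
  by_contra haB
  obtain ⟨b, hb, hbA, hba⟩ := lexLE_iff_forall_exists.mp h a ha haB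
  exact hbA (le_antisymm hba (hB b hb) ▸ ha)

theorem exists_forall_lexLE {ι : Type*} (f : ι → Finset ℕ) {s : Set ι} (hs : s.Nonempty)
    (n : ℕ) (hf : ∀ i ∈ s, f i ⊆ range n) : ∃ i ∈ s, ∀ j ∈ s, lexLE (f j) (f i) := by
  have hfin : (lexKey ∘ f '' s).Finite :=
    ((((range n).powerset.image lexKey : Finset _) : Set _).toFinite).subset
      (by rintro _ ⟨i, hi, rfl⟩; exact mem_image_of_mem _ (mem_powerset.mpr (hf i hi)))
  obtain ⟨_, ⟨i, hi, rfl⟩, hmax⟩ := Set.exists_max_image _ id hfin (hs.image _)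
  exact ⟨i, hi, fun j hj => lexLE_iff_lexKey_le.mpr (hmax _ ⟨j, hj, rfl⟩)⟩

end LexOrder

section Subobjects

open Finset

variable {D : Type*} [Category D]

namespace CategoryTheory.Subobject

theorem map_strictMono {A B : D} (f : A ⟶ B) [Mono f] :
    StrictMono (map f).obj :=
  (map f).monotone.strictMono_of_injective (map_obj_injective f)

theorem map_arrow_top {Y : D} (t : Subobject Y) :
    (map t.arrow).obj ⊤ = t := by
  rw [map_top, mk_arrow]

noncomputable def mapObjIso {A B : D} (f : A ⟶ B) [Mono f] (u : Subobject A) :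
    ((map f).obj u : D) ≅ (u : D) :=
  underlying.mapIso (eqToIso (by rw [← map_mk, mk_arrow])) ≪≫ underlyingIso (u.arrow ≫ f)

noncomputable def pullbackObjIsoOfLE [HasPullbacks D] {Y : D} {t u : Subobject Y} (h : u ≤ t) :
    ((pullback t.arrow).obj u : D) ≅ (u : D) :=
  (mapObjIso t.arrow _).symm ≪≫
    underlying.mapIso (eqToIso (by rw [← inf_eq_map_pullback, inf_eq_right.mpr h]))

end CategoryTheory.Subobject

section Indecomposable

variable [HasZeroMorphisms D] [HasBinaryBiproducts D]

theorem CategoryTheory.Limits.Indecomposable.of_iso {A B : D} (e : A ≅ B)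
    (h : Indecomposable A) : Indecomposable B :=
  ⟨fun hB => h.1 (hB.of_iso e), fun U V e' => h.2 U V (e ≪≫ e')⟩

def IsIndecChain {Y : D} (s : Finset (Subobject Y)) : Prop :=
  IsChain (· ≤ ·) (s : Set (Subobject Y)) ∧ ∀ t ∈ s, Indecomposable ((t : Subobject Y) : D)

theorem IsIndecChain.insert_top {Y : D} [DecidableEq (Subobject Y)] (hY : Indecomposable Y)
    {s : Finset (Subobject Y)} (hs : IsIndecChain s) : IsIndecChain (insert ⊤ s) := by
  refine ⟨?_, fun t ht => ?_⟩
  · rw [coe_insert]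
    exact hs.1.insert fun _ _ _ => Or.inr le_top
  · rcases mem_insert.mp ht with rfl | ht
    exacts [Indecomposable.of_iso (asIso (⊤ : Subobject Y).arrow).symm hY, hs.2 t ht]

theorem IsIndecChain.image {A B : D} [DecidableEq (Subobject B)] {φ : Subobject A → Subobject B}
    (hφ : Monotone φ) {s : Finset (Subobject A)} (hs : IsIndecChain s)
    (he : ∀ u ∈ s, Nonempty ((φ u : D) ≅ (u : D))) : IsIndecChain (s.image φ) := by
  refine ⟨?_, fun v hv => ?_⟩
  · rw [coe_image]
    exact hs.1.image_of_map_rel _ _ _ fun _ _ h => hφ h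
  · obtain ⟨u, hu, rfl⟩ := mem_image.mp hv
    exact Indecomposable.of_iso (he u hu).some.symm (hs.2 u hu)

end Indecomposable

end Subobjects

section Length

open Subobject

variable {len : C → ℕ}

theorem ObjLength.unique {Z : C} {m n : ℕ} (hm : ObjLength Z m) (hn : ObjLength Z n) : m = n :=
  let ⟨⟨f, hf, _⟩, hm'⟩ := hm
  let ⟨⟨g, hg, _⟩, hn'⟩ := hn
  le_antisymm (hn' m f hf) (hm' n g hg)

theorem ObjLength.of_iso {A B : C} (e : A ≅ B) {n : ℕ} (h : ObjLength A n) : ObjLength B n := by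
  obtain ⟨⟨f, hf, hf0, hfl⟩, hbound⟩ := h
  let φ := mapIsoToOrderIso e
  refine ⟨⟨φ ∘ f, φ.strictMono.comp hf, by simp [hf0], by simp [hfl]⟩, fun m g hg => ?_⟩
  exact hbound m (φ.symm ∘ g) (φ.symm.strictMono.comp hg)

theorem ObjLength.le_of_subobject {Y : C} {t : Subobject Y} {m n : ℕ}
    (ht : ObjLength (t : C) m) (hY : ObjLength Y n) : m ≤ n := by
  obtain ⟨⟨f, hf, -⟩, -⟩ := ht
  exact hY.2 m _ ((map_strictMono t.arrow).comp hf)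

theorem ObjLength.lt_of_subobject {Y : C} {t : Subobject Y} (hne : t ≠ ⊤) {m n : ℕ}
    (ht : ObjLength (t : C) m) (hY : ObjLength Y n) : m < n := by
  obtain ⟨⟨f, hf, -, hfl⟩, -⟩ := ht
  have hlast : (map t.arrow).obj (f (Fin.last m)) < ⊤ := by
    rw [hfl, map_arrow_top]
    exact hne.lt_top
  exact hY.2 (m + 1) _
    (LTSeries.strictMono ((LTSeries.mk m _ ((map_strictMono t.arrow).comp hf)).snoc ⊤ hlast))

theorem ObjLength.isArtinianObject {Z : C} {n : ℕ} (h : ObjLength Z n) : IsArtinianObject Z := by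
  refine (isArtinianObject_iff_not_strictAnti Z).mpr fun f hf => ?_
  have := h.2 (n + 1) (fun i => f (n + 1 - i)) fun i j hij => hf (by omega)
  omega

theorem objLength_one_of_simple (Z : C) [Simple Z] : ObjLength Z 1 := by
  have := (simple_iff_subobject_isSimpleOrder Z).mp inferInstance
  refine ⟨⟨![⊥, ⊤], Fin.strictMono_iff_lt_succ.mpr fun i => ?_, rfl, rfl⟩, fun m f hf => ?_⟩
  · fin_cases i
    exact bot_lt_top
  · by_contra! hm
    have h01 : f ⟨0, by omega⟩ < f ⟨1, by omega⟩ := hf (Fin.mk_lt_mk.mpr zero_lt_one)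
    have h12 : f ⟨1, by omega⟩ < f ⟨2, by omega⟩ := hf (Fin.mk_lt_mk.mpr one_lt_two)
    rcases IsSimpleOrder.eq_bot_or_eq_top (f ⟨1, by omega⟩) with h | h
    · exact (h ▸ h01).not_ge bot_le
    · exact (h ▸ h12).not_ge le_top

theorem len_eq_of_iso (hlen : ∀ Z : C, ObjLength Z (len Z)) {A B : C} (e : A ≅ B) :
    len A = len B :=
  ((hlen A).of_iso e).unique (hlen B)

theorem len_top (hlen : ∀ Z : C, ObjLength Z (len Z)) (Y : C) :
    len ((⊤ : Subobject Y) : C) = len Y :=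
  len_eq_of_iso hlen (asIso (⊤ : Subobject Y).arrow)

theorem one_le_len (hlen : ∀ Z : C, ObjLength Z (len Z)) {Z : C} (hZ : ¬IsZero Z) :
    1 ≤ len Z := by
  have := (hlen Z).isArtinianObject
  obtain ⟨s, hs⟩ := exists_simple_subobject hZ
  rw [(objLength_one_of_simple (s : C)).unique (hlen _)]
  exact (hlen _).le_of_subobject (hlen Z)

end Length

section ChainValues

open Finset Subobject

variable {len : C → ℕ}

theorem image_len_image_of_iso (hlen : ∀ Z : C, ObjLength Z (len Z)) {A B : C}
    [DecidableEq (Subobject B)] {φ : Subobject A → Subobject B} {s : Finset (Subobject A)}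
    (he : ∀ u ∈ s, Nonempty ((φ u : C) ≅ (u : C))) :
    (s.image φ).image (fun v : Subobject B => len (v : C)) =
      s.image fun u : Subobject A => len (u : C) := by
  rw [image_image]
  exact image_congr fun u hu => len_eq_of_iso hlen (he u hu).some

theorem IsGRChainVal.of_iso (hlen : ∀ Z : C, ObjLength Z (len Z)) {A B : C} (e : A ≅ B)
    {S : Finset ℕ} (h : IsGRChainVal len A S) : IsGRChainVal len B S := by
  classical
  obtain ⟨s, hchain, htop, hind, rfl⟩ := h
  have he (u : Subobject A) (_ : u ∈ s) := Nonempty.intro (mapObjIso e.hom u)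
  have hc := IsIndecChain.image (Subobject.map e.hom).monotone ⟨hchain, hind⟩ he
  refine ⟨_, hc.1, mem_image.mpr ⟨⊤, htop, ?_⟩, hc.2, image_len_image_of_iso hlen he⟩
  rw [Subobject.map_top, mk_eq_top_of_isIso]

theorem IsGRChainVal.insert_len (hlen : ∀ Z : C, ObjLength Z (len Z)) {Y : C}
    (hY : Indecomposable Y) {t : Subobject Y} {S : Finset ℕ} (h : IsGRChainVal len (t : C) S) :
    IsGRChainVal len Y (insert (len Y) S) := by
  classical
  obtain ⟨s, hchain, htop, hind, rfl⟩ := h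
  have he (u : Subobject (t : C)) (_ : u ∈ s) := Nonempty.intro (mapObjIso t.arrow u)
  have hc := (IsIndecChain.image (Subobject.map t.arrow).monotone ⟨hchain, hind⟩ he).insert_top hY
  refine ⟨_, hc.1, mem_insert_self _ _, hc.2, ?_⟩
  rw [image_insert, len_top hlen, image_len_image_of_iso hlen he]

theorem IsGRChainVal.of_forall_le (hlen : ∀ Z : C, ObjLength Z (len Z)) {Y : C}
    {s : Finset (Subobject Y)} (hs : IsIndecChain s) {t : Subobject Y} (ht : t ∈ s)
    (hle : ∀ u ∈ s, u ≤ t) :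
    IsGRChainVal len (t : C) (s.image fun u : Subobject Y => len (u : C)) := by
  classical
  have he (u : Subobject Y) (hu : u ∈ s) := Nonempty.intro (pullbackObjIsoOfLE (hle u hu))
  have hc := IsIndecChain.image (Subobject.pullback t.arrow).monotone hs he
  refine ⟨_, hc.1, mem_image.mpr ⟨t, ht, by simpa using pullback_self t.arrow⟩, hc.2,
    image_len_image_of_iso hlen he⟩

theorem IsGRChainVal.len_mem (hlen : ∀ Z : C, ObjLength Z (len Z)) {X : C} {A : Finset ℕ}
    (h : IsGRChainVal len X A) : len X ∈ A := by
  obtain ⟨s, -, htop, -, rfl⟩ := h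
  exact len_top hlen X ▸ mem_image_of_mem _ htop

theorem IsGRChainVal.one_le_of_mem (hlen : ∀ Z : C, ObjLength Z (len Z)) {X : C}
    {A : Finset ℕ} (h : IsGRChainVal len X A) {a : ℕ} (ha : a ∈ A) : 1 ≤ a := by
  obtain ⟨s, -, -, hind, rfl⟩ := h
  obtain ⟨t, ht, rfl⟩ := mem_image.mp ha
  exact one_le_len hlen (hind t ht).1

theorem IsGRChainVal.le_len_of_mem (hlen : ∀ Z : C, ObjLength Z (len Z)) {X : C}
    {A : Finset ℕ} (h : IsGRChainVal len X A) {a : ℕ} (ha : a ∈ A) : a ≤ len X := by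
  obtain ⟨s, -, -, -, rfl⟩ := h
  obtain ⟨t, -, rfl⟩ := mem_image.mp ha
  exact (hlen _).le_of_subobject (hlen X)

end ChainValues

section Measure

open Finset Subobject

variable {len : C → ℕ} {mu : C → Finset ℕ}

theorem IsGRMeasure.eq_of_iso (hmu : IsGRMeasure len mu) (hlen : ∀ Z : C, ObjLength Z (len Z))
    {A B : C} (e : A ≅ B) (hA : Indecomposable A) : mu A = mu B := by
  have hB := Indecomposable.of_iso e hA
  exact lexLE_antisymm ((hmu B hB).2 _ ((hmu A hA).1.of_iso hlen e))
    ((hmu A hA).2 _ ((hmu B hB).1.of_iso hlen e.symm))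

theorem IsGRMeasure.one_mem (hmu : IsGRMeasure len mu) (hlen : ∀ Z : C, ObjLength Z (len Z))
    {X : C} (hX : Indecomposable X) : 1 ∈ mu X := by
  classical
  have := (hlen X).isArtinianObject
  obtain ⟨s, hs⟩ := exists_simple_subobject hX.1
  have hs_indec : Indecomposable (s : C) := indecomposable_of_simple _
  have hchain : IsIndecChain (insert ⊤ {s}) :=
    IsIndecChain.insert_top hX
      ⟨by rw [coe_singleton]; exact Set.subsingleton_singleton.isChain, by simpa using hs_indec⟩
  have hlen_s : len (s : C) = 1 := ((objLength_one_of_simple _).unique (hlen _)).symm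
  have hval : IsGRChainVal len X _ := ⟨_, hchain.1, mem_insert_self _ _, hchain.2, rfl⟩
  exact mem_of_lexLE_of_forall_le ((hmu X hX).2 _ hval) (by simp [hlen_s]) fun _ hb =>
    (hmu X hX).1.one_le_of_mem hlen hb

theorem IsGRMeasure.lexLE_insert_of_isGRChainVal (hmu : IsGRMeasure len mu)
    (hlen : ∀ Z : C, ObjLength Z (len Z)) {Y : C} {A B : Finset ℕ} (h : IsGRChainVal len Y A)
    (hB : len Y ∉ B)
    (hmax : ∀ t : Subobject Y, t ≠ ⊤ → Indecomposable (t : C) → lexLE (mu (t : C)) B) :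
    lexLE A (insert (len Y) B) := by
  classical
  obtain ⟨s, hchain, htop, hind, rfl⟩ := h
  have hs : IsIndecChain (s.erase ⊤) :=
    ⟨hchain.mono (coe_subset.mpr (erase_subset _ _)), fun t ht => hind t (mem_of_mem_erase ht)⟩
  have hlt : len Y ∉ (s.erase ⊤).image fun u : Subobject Y => len (u : C) := by
    simp only [mem_image, mem_erase, not_exists, not_and]
    exact fun u hu => ((hlen _).lt_of_subobject hu.1 (hlen Y)).ne
  rw [← insert_erase htop, image_insert, len_top hlen]
  refine lexLE_insert_insert ?_ hlt hB
  rcases (s.erase ⊤).eq_empty_or_nonempty with hempty | hne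
  · rw [hempty, image_empty]
    exact lexLE_of_subset (empty_subset _)
  obtain ⟨t, ht, htmax⟩ := (s.erase ⊤).exists_maximal hne
  have hle : ∀ u ∈ s.erase ⊤, u ≤ t := fun u hu => (hs.1.total hu ht).elim id (htmax hu)
  exact lexLE_trans ((hmu _ (hs.2 t ht)).2 _ (IsGRChainVal.of_forall_le hlen hs ht hle))
    (hmax t (ne_of_mem_erase ht) (hs.2 t ht))

theorem IsGRMeasure.eq_insert_of_forall_lexLE (hmu : IsGRMeasure len mu)
    (hlen : ∀ Z : C, ObjLength Z (len Z)) {Y : C} (hY : Indecomposable Y) {t₀ : Subobject Y}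
    (ht₀ : t₀ ≠ ⊤) (ht₀i : Indecomposable (t₀ : C))
    (hmax : ∀ t : Subobject Y, t ≠ ⊤ → Indecomposable (t : C) → lexLE (mu (t : C)) (mu (t₀ : C))) :
    mu Y = insert (len Y) (mu (t₀ : C)) := by
  have hY_notMem : len Y ∉ mu (t₀ : C) := fun h =>
    ((hmu _ ht₀i).1.le_len_of_mem hlen h).not_gt ((hlen _).lt_of_subobject ht₀ (hlen Y))
  exact lexLE_antisymm (hmu.lexLE_insert_of_isGRChainVal hlen (hmu Y hY).1 hY_notMem hmax)
    ((hmu Y hY).2 _ ((hmu _ ht₀i).1.insert_len hlen hY))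

theorem IsGRMeasure.exists_ne_top_indecomposable (hmu : IsGRMeasure len mu)
    (hlen : ∀ Z : C, ObjLength Z (len Z)) {X T : C} (hX : Indecomposable X)
    (hT : Indecomposable T) (hXT : lexLT (mu X) (mu T)) :
    ∃ u : Subobject T, u ≠ ⊤ ∧ Indecomposable (u : C) := by
  have := (hlen T).isArtinianObject
  obtain ⟨s, hs⟩ := exists_simple_subobject hT.1
  refine ⟨s, fun hs_top => hXT.2 (lexLE_of_subset fun a ha => ?_), indecomposable_of_simple _⟩
  have hlenT : len T = 1 := by
    rw [← len_top hlen T, ← hs_top]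
    exact ((objLength_one_of_simple _).unique (hlen _)).symm
  have ha1 : a = 1 := le_antisymm (hlenT ▸ (hmu T hT).1.le_len_of_mem hlen ha)
    ((hmu T hT).1.one_le_of_mem hlen ha)
  exact ha1 ▸ hmu.one_mem hlen hX

theorem IsGRMeasure.exists_isGRPred_of_forall_lexLE (hmu : IsGRMeasure len mu)
    (hlen : ∀ Z : C, ObjLength Z (len Z)) {X T : C} (hX : Indecomposable X)
    (hT : Indecomposable T) (hXT : lexLT (mu X) (mu T))
    (hsub : ∀ u : Subobject T, u ≠ ⊤ → Indecomposable (u : C) → lexLE (mu (u : C)) (mu X)) :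
    ∃ Y' : C, IsGRPred mu Y' T ∧ lexLE (mu Y') (mu X) ∧ len Y' ≤ len X := by
  obtain ⟨t₀, ⟨ht₀, ht₀i⟩, hmax⟩ := exists_forall_lexLE (fun u : Subobject T => mu (u : C))
    (hmu.exists_ne_top_indecomposable hlen hX hT hXT) (len T + 1) fun u hu a ha =>
      mem_range_succ_iff.mpr (((hmu _ hu.2).1.le_len_of_mem hlen ha).trans
        ((hlen _).le_of_subobject (hlen T)))
  have hmax' (t : Subobject T) (ht : t ≠ ⊤) (hti : Indecomposable (t : C)) :=
    hmax t ⟨ht, hti⟩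
  have hpred : IsGRPred mu (t₀ : C) T :=
    ⟨ht₀i, hT, ⟨t₀.arrow, inferInstance, fun h => ht₀ ((isIso_arrow_iff_eq_top t₀).mp h)⟩, hmax'⟩
  refine ⟨t₀, hpred, hsub t₀ ht₀ ht₀i, ?_⟩
  have ht₀T : len (t₀ : C) < len T := (hlen _).lt_of_subobject ht₀ (hlen T)
  by_contra! hXt₀
  have hX_lt (a : ℕ) (ha : a ∈ mu X) : a < len T :=
    (((hmu X hX).1.le_len_of_mem hlen ha).trans_lt hXt₀).trans ht₀T
  have hXle : lexLE (mu X) (mu (t₀ : C)) := lexLE_of_lexLE_insert hX_lt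
    (hmu.eq_insert_of_forall_lexLE hlen hT ht₀ ht₀i hmax' ▸ hXT.1)
  have hlen_mem := (hmu _ ht₀i).1.len_mem hlen
  rw [← lexLE_antisymm hXle (hsub t₀ ht₀ ht₀i)] at hlen_mem
  exact hXt₀.not_ge ((hmu X hX).1.le_len_of_mem hlen hlen_mem)

end Measure

/-- (GR7): if `X, Y` are indecomposable with `μ(X) < μ(Y)`, then there are
indecomposable subobjects `Y' ⊂ Y'' ⊆ Y` such that `Y'` is a Gabriel-Roiter
predecessor of `Y''`, `μ(Y') ≤ μ(X) < μ(Y'')`, and `ℓ(Y') ≤ ℓ(X)`. -/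
theorem grMeasure_GR7
    (len : C → ℕ) (hlen : ∀ Z : C, ObjLength Z (len Z))
    (mu : C → Finset ℕ) (hmu : IsGRMeasure len mu)
    (X Y : C) (hX : Indecomposable X) (hY : Indecomposable Y)
    (hXY : lexLT (mu X) (mu Y)) :
    ∃ (t : Subobject Y) (Y' : C),
      Indecomposable ((t : Subobject Y) : C) ∧
      IsGRPred mu Y' ((t : Subobject Y) : C) ∧
      lexLE (mu Y') (mu X) ∧
      lexLT (mu X) (mu ((t : Subobject Y) : C)) ∧
      len Y' ≤ len X := by
  have := (hlen Y).isArtinianObject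
  let S : Set (Subobject Y) := {t | Indecomposable (t : C) ∧ lexLT (mu X) (mu (t : C))}
  have htop : ⊤ ∈ S := by
    have hi := Indecomposable.of_iso (asIso (⊤ : Subobject Y).arrow).symm hY
    exact ⟨hi, hmu.eq_of_iso hlen (asIso (⊤ : Subobject Y).arrow) hi ▸ hXY⟩
  obtain ⟨t, ⟨hti, hXt⟩, hmin⟩ := wellFounded_lt.has_min S ⟨⊤, htop⟩
  have hsub (u : Subobject (t : C)) (hu : u ≠ ⊤) (hui : Indecomposable (u : C)) :
      lexLE (mu (u : C)) (mu X) := by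
    have hui' := Indecomposable.of_iso (Subobject.mapObjIso t.arrow u).symm hui
    have hlt : (Subobject.map t.arrow).obj u < t :=
      (Subobject.map_strictMono t.arrow hu.lt_top).trans_eq (Subobject.map_arrow_top t)
    rw [← hmu.eq_of_iso hlen (Subobject.mapObjIso t.arrow u) hui']
    by_contra h
    exact hmin _ ⟨hui', lexLT_iff_not_lexLE.mpr h⟩ hlt
  obtain ⟨Y', hpred, hY'X, hlenY'⟩ := hmu.exists_isGRPred_of_forall_lexLE hlen hX hti hXt hsub
  exact ⟨t, Y', hti, hpred, hY'X, hXt, hlenY'⟩
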